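/- For m = 3, define α(k) = -4(n+3)k^{10} + 32(n+1)k⁸·log(k) - 4(n-3)k⁸ + 32(n-1)k²·log(k) + 4(n+3)k² + 4(n-3) for k ≥ 1, where n ≥ 1 is real. Then α(1) = α'(1) = α''(1) = 0, α'''(1) = 512n > 0, and α(k) → -∞ as k → ∞; consequently there exists k̃ > 1 with α(k) > 0 for 1 < k < k̃ and α(k̃) = 0. -/

import Mathlib

/-!
Writing `α', α'', α'''` for the explicit derivatives (valid for `k > 0`), one computes
`α(1) = α'(1) = α''(1) = 0` and `α'''(1) = 512 n > 0`. Hence `α''' > 0` on some `(1, u)`, and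
integrating three times from `1` gives `α > 0` there. Since `α(k) ~ -4(n+3) k^10`, `α` becomes
negative, and the least zero of `α` to the right of `(1, u)` is the required `k̃`.
-/

open Real Filter Set Topology

lemma pos_of_eq_zero_of_hasDerivAt_pos {f f' : ℝ → ℝ} {a b : ℝ}
    (hf : ∀ x ∈ Ico a b, HasDerivAt f (f' x) x) (ha : f a = 0)
    (hf' : ∀ x ∈ Ioo a b, 0 < f' x) : ∀ x ∈ Ioo a b, 0 < f x := by
  intro x hx
  have hsub : Icc a x ⊆ Ico a b := Icc_subset_Ico_right hx.2
  have hmono : StrictMonoOn f (Icc a x) :=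
    strictMonoOn_of_deriv_pos (convex_Icc a x)
      (HasDerivAt.continuousOn fun y hy => hf y (hsub hy)) fun y hy => by
        rw [interior_Icc] at hy
        rw [(hf y (hsub (Ioo_subset_Icc_self hy))).deriv]
        exact hf' y ⟨hy.1, hy.2.trans hx.2⟩
  simpa [ha] using hmono (left_mem_Icc.2 hx.1.le) (right_mem_Icc.2 hx.1.le) hx.1

lemma exists_first_zero {f : ℝ → ℝ} {b K : ℝ} (hbK : b ≤ K) (hf : ContinuousOn f (Icc b K))
    (hb : 0 < f b) (hK : f K ≤ 0) : ∃ c ∈ Ioc b K, f c = 0 ∧ ∀ x ∈ Ico b c, 0 < f x := by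
  have hzero : ∀ x ∈ Icc b K, f x ≤ 0 → ∃ y ∈ Icc b x, f y = 0 := fun x hx hfx =>
    intermediate_value_Icc' hx.1 (hf.mono (Icc_subset_Icc_right hx.2)) ⟨hfx, hb.le⟩
  set Z := Icc b K ∩ f ⁻¹' {0}
  have hZ : IsCompact Z := isCompact_Icc.of_isClosed_subset
    (hf.preimage_isClosed_of_isClosed isClosed_Icc isClosed_singleton) inter_subset_left
  have hZne : Z.Nonempty := by
    obtain ⟨y, hy, hfy⟩ := hzero K (right_mem_Icc.2 hbK) hK
    exact ⟨y, ⟨hy.1, hy.2⟩, hfy⟩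
  obtain ⟨⟨hbc, hcK⟩, hfc⟩ := hZ.sInf_mem hZne
  have hfirst : ∀ x ∈ Ico b (sInf Z), 0 < f x := by
    intro x hx
    by_contra! hfx
    obtain ⟨y, hy, hfy⟩ := hzero x ⟨hx.1, hx.2.le.trans hcK⟩ hfx
    have : sInf Z ≤ y := csInf_le hZ.bddBelow ⟨⟨hy.1, hy.2.trans (hx.2.le.trans hcK)⟩, hfy⟩
    linarith [hx.2, hy.2]
  refine ⟨sInf Z, ⟨lt_of_le_of_ne hbc ?_, hcK⟩, hfc, hfirst⟩
  intro hbZ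
  rw [hbZ] at hb
  exact hb.ne' hfc

noncomputable section

def alpha (n k : ℝ) : ℝ :=
  -4 * (n + 3) * k ^ 10 + 32 * (n + 1) * k ^ 8 * log k - 4 * (n - 3) * k ^ 8
    + 32 * (n - 1) * k ^ 2 * log k + 4 * (n + 3) * k ^ 2 + 4 * (n - 3)

def alpha' (n k : ℝ) : ℝ :=
  -40 * (n + 3) * k ^ 9 + 256 * (n + 1) * k ^ 7 * log k + 128 * k ^ 7
    + 64 * (n - 1) * k * log k + (40 * n - 8) * k

def alpha'' (n k : ℝ) : ℝ :=
  -360 * (n + 3) * k ^ 8 + 1792 * (n + 1) * k ^ 6 * log k + (256 * n + 1152) * k ^ 6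
    + 64 * (n - 1) * log k + 104 * n - 72

def alpha''' (n k : ℝ) : ℝ :=
  -2880 * (n + 3) * k ^ 7 + 10752 * (n + 1) * k ^ 5 * log k + (3328 * n + 8704) * k ^ 5
    + 64 * (n - 1) / k

end

section

variable (n : ℝ)

lemma hasDerivAt_alpha {x : ℝ} (hx : 0 < x) : HasDerivAt (alpha n) (alpha' n x) x := by
  have hlog := hasDerivAt_log hx.ne'
  refine ((((((hasDerivAt_pow 10 x).const_mul (-4 * (n + 3))).add
      (((hasDerivAt_pow 8 x).const_mul (32 * (n + 1))).mul hlog)).sub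
      ((hasDerivAt_pow 8 x).const_mul (4 * (n - 3)))).add
      (((hasDerivAt_pow 2 x).const_mul (32 * (n - 1))).mul hlog)).add
      ((hasDerivAt_pow 2 x).const_mul (4 * (n + 3)))).add_const (4 * (n - 3)) |>.congr_deriv ?_
  simp only [alpha']
  field_simp
  ring

lemma hasDerivAt_alpha' {x : ℝ} (hx : 0 < x) : HasDerivAt (alpha' n) (alpha'' n x) x := by
  have hlog := hasDerivAt_log hx.ne'
  refine (((((hasDerivAt_pow 9 x).const_mul (-40 * (n + 3))).add
      (((hasDerivAt_pow 7 x).const_mul (256 * (n + 1))).mul hlog)).add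
      ((hasDerivAt_pow 7 x).const_mul 128)).add
      (((hasDerivAt_id' x).const_mul (64 * (n - 1))).mul hlog)).add
      ((hasDerivAt_id' x).const_mul (40 * n - 8)) |>.congr_deriv ?_
  simp only [alpha'']
  field_simp
  ring

lemma hasDerivAt_alpha'' {x : ℝ} (hx : 0 < x) : HasDerivAt (alpha'' n) (alpha''' n x) x := by
  have hlog := hasDerivAt_log hx.ne'
  refine ((((((hasDerivAt_pow 8 x).const_mul (-360 * (n + 3))).add
      (((hasDerivAt_pow 6 x).const_mul (1792 * (n + 1))).mul hlog)).add
      ((hasDerivAt_pow 6 x).const_mul (256 * n + 1152))).add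
      (hlog.const_mul (64 * (n - 1)))).add_const (104 * n)).sub_const 72 |>.congr_deriv ?_
  simp only [alpha''']
  field_simp
  ring

lemma eqOn_deriv_alpha : EqOn (deriv (alpha n)) (alpha' n) (Ioi 0) :=
  fun _ hx => (hasDerivAt_alpha n hx).deriv

lemma eqOn_deriv_deriv_alpha : EqOn (deriv (deriv (alpha n))) (alpha'' n) (Ioi 0) :=
  fun _ hx => ((eqOn_deriv_alpha n).deriv isOpen_Ioi hx).trans (hasDerivAt_alpha' n hx).deriv

lemma eqOn_deriv_deriv_deriv_alpha :
    EqOn (deriv (deriv (deriv (alpha n)))) (alpha''' n) (Ioi 0) :=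
  fun _ hx => ((eqOn_deriv_deriv_alpha n).deriv isOpen_Ioi hx).trans
    (hasDerivAt_alpha'' n hx).deriv

lemma alpha_one : alpha n 1 = 0 := by simp [alpha]; ring
lemma alpha'_one : alpha' n 1 = 0 := by simp [alpha']; ring
lemma alpha''_one : alpha'' n 1 = 0 := by simp [alpha'']; ring
lemma alpha'''_one : alpha''' n 1 = 512 * n := by simp [alpha''']; ring

lemma tendsto_alpha_atTop_atBot (hn : -3 < n) : Tendsto (alpha n) atTop atBot := by
  have hlog : Tendsto (fun k => log k / k) atTop (𝓝 0) := by
    simpa using tendsto_pow_log_div_mul_add_atTop 1 0 1 one_ne_zero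
  have hinv : Tendsto (fun k : ℝ => k⁻¹) atTop (𝓝 0) := tendsto_inv_atTop_zero
  have hlead : Tendsto (fun k => -4 * (n + 3) + 32 * (n + 1) * (log k / k) * k⁻¹
      - 4 * (n - 3) * k⁻¹ ^ 2 + 32 * (n - 1) * (log k / k) * k⁻¹ ^ 7
      + 4 * (n + 3) * k⁻¹ ^ 8 + 4 * (n - 3) * k⁻¹ ^ 10) atTop (𝓝 (-4 * (n + 3))) := by
    simpa using ((((((tendsto_const_nhds (x := -4 * (n + 3))).add
      ((hlog.const_mul (32 * (n + 1))).mul hinv)).sub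
      ((hinv.pow 2).const_mul (4 * (n - 3)))).add
      ((hlog.const_mul (32 * (n - 1))).mul (hinv.pow 7))).add
      ((hinv.pow 8).const_mul (4 * (n + 3)))).add
      ((hinv.pow 10).const_mul (4 * (n - 3))))
  refine ((tendsto_pow_atTop (by norm_num : 10 ≠ 0)).atTop_mul_neg (by linarith) hlead).congr' ?_
  filter_upwards [eventually_gt_atTop 0] with k hk
  simp only [alpha]
  field_simp

lemma continuousAt_alpha'''_one : ContinuousAt (alpha''' n) 1 := by
  have hlog := continuousAt_log one_ne_zero
  unfold alpha'''
  fun_prop (disch := norm_num)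

lemma exists_alpha_pos_Ioo (hn : 0 < n) : ∃ u, 1 < u ∧ ∀ x ∈ Ioo 1 u, 0 < alpha n x := by
  have h''' : ∀ᶠ x in 𝓝 1, 0 < alpha''' n x :=
    (continuousAt_alpha'''_one n).eventually
      (eventually_gt_nhds (by rw [alpha'''_one]; positivity))
  obtain ⟨u, hu, hpos⟩ := exists_Ico_subset_of_mem_nhds h''' ⟨2, one_lt_two⟩
  have hx : ∀ x ∈ Ico (1 : ℝ) u, 0 < x := fun x hx => one_pos.trans_le hx.1
  have h'' : ∀ x ∈ Ioo 1 u, 0 < alpha'' n x :=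
    pos_of_eq_zero_of_hasDerivAt_pos (fun x h => hasDerivAt_alpha'' n (hx x h))
      (alpha''_one n) fun x h => hpos (Ioo_subset_Ico_self h)
  have h' : ∀ x ∈ Ioo 1 u, 0 < alpha' n x :=
    pos_of_eq_zero_of_hasDerivAt_pos (fun x h => hasDerivAt_alpha' n (hx x h)) (alpha'_one n) h''
  exact ⟨u, hu,
    pos_of_eq_zero_of_hasDerivAt_pos (fun x h => hasDerivAt_alpha n (hx x h)) (alpha_one n) h'⟩

lemma exists_alpha_first_zero (hn : 0 < n) :
    ∃ c, 1 < c ∧ (∀ k, 1 < k → k < c → 0 < alpha n k) ∧ alpha n c = 0 := by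
  obtain ⟨u, hu, hpos⟩ := exists_alpha_pos_Ioo n hn
  obtain ⟨b, hb, hbu⟩ := exists_between hu
  obtain ⟨K, hK, hbK⟩ := (((tendsto_alpha_atTop_atBot n (by linarith)).eventually
    (eventually_le_atBot 0)).and (eventually_ge_atTop b)).exists
  have hcont : ContinuousOn (alpha n) (Icc b K) :=
    HasDerivAt.continuousOn fun x hx => hasDerivAt_alpha n (by linarith [hx.1])
  obtain ⟨c, hc, hzero, hfirst⟩ := exists_first_zero hbK hcont (hpos b ⟨hb, hbu⟩) hK
  refine ⟨c, hb.trans hc.1, fun k hk hkc => ?_, hzero⟩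
  rcases lt_or_ge k b with hkb | hbk
  · exact hpos k ⟨hk, hkb.trans hbu⟩
  · exact hfirst k ⟨hbk, hkc⟩

end

/-- Boundary-matching function for `m = 3`: `α` vanishes to third order at `k = 1` with
positive third derivative, tends to `-∞`, hence has a first zero `k̃ > 1` with `α > 0`
on `(1, k̃)`. -/
theorem stmt_12 (n : ℝ) (hn : 1 ≤ n) (α : ℝ → ℝ)
    (hα : α = fun k => -4 * (n + 3) * k ^ 10 + 32 * (n + 1) * k ^ 8 * Real.log k
        - 4 * (n - 3) * k ^ 8 + 32 * (n - 1) * k ^ 2 * Real.log k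
        + 4 * (n + 3) * k ^ 2 + 4 * (n - 3)) :
    α 1 = 0 ∧ deriv α 1 = 0 ∧ deriv (deriv α) 1 = 0 ∧
    deriv (deriv (deriv α)) 1 = 512 * n ∧ 0 < 512 * n ∧
    Filter.Tendsto α Filter.atTop Filter.atBot ∧
    ∃ ktilde : ℝ, 1 < ktilde ∧ (∀ k : ℝ, 1 < k → k < ktilde → 0 < α k) ∧
      α ktilde = 0 := by
  obtain rfl : α = alpha n := hα
  have h1 : (1 : ℝ) ∈ Ioi 0 := mem_Ioi.2 one_pos
  exact ⟨alpha_one n,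
    (eqOn_deriv_alpha n h1).trans (alpha'_one n),
    (eqOn_deriv_deriv_alpha n h1).trans (alpha''_one n),
    (eqOn_deriv_deriv_deriv_alpha n h1).trans (alpha'''_one n),
    by positivity, tendsto_alpha_atTop_atBot n (by linarith),
    exists_alpha_first_zero n (by linarith)⟩
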